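/- Under the Gaussian path X_t = α_t X_1 + σ_t X_0 with X_0 ~ N(0, I) independent of X_1, the Hessian of the log-marginal density satisfies ∇_x^2 log p_t(x) = (α_t^2 / σ_t^4) · Cov[X_1 | X_t = x] − (1/σ_t^2) · I, and hence the Laplacian satisfies Δ_x log p_t(x) = (α_t^2 · tr Cov[X_1 | X_t = x] − D σ_t^2) / σ_t^4. -/

import Mathlib

open scoped BigOperators
open MeasureTheory

noncomputable def gauss (D : ℕ) (σ : ℝ) (μ x : Fin D → ℝ) : ℝ :=
  (2 * Real.pi * σ ^ 2) ^ (-(D : ℝ) / 2) * Real.exp (-(∑ i, (x i - μ i) ^ 2) / (2 * σ ^ 2))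

/-- Second partial derivative `∂_j ∂_i f`. -/
noncomputable def hess (D : ℕ) (f : (Fin D → ℝ) → ℝ) (x : Fin D → ℝ) (i j : Fin D) : ℝ :=
  fderiv ℝ (fun y => fderiv ℝ f y (Pi.single i 1)) x (Pi.single j 1)

/-!
Differentiating the Gaussian kernel in `x` brings down the score `(α x₁ - x) / σ²`. Writing `N`
and `M` for the unnormalised first and second posterior moments, differentiation under the
integral gives `∂ⱼ p = (α Nⱼ - xⱼ p) / σ²` and `∂ⱼ Nᵢ = (α Mᵢⱼ - xⱼ Nᵢ) / σ²`. Hence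
`∂ᵢ log p = (α Nᵢ / p - xᵢ) / σ²`, and the quotient rule turns its derivative into
`α² / σ⁴ (Mᵢⱼ / p - Nᵢ Nⱼ / p²) - δᵢⱼ / σ²`; the trace gives the Laplacian.

The chain rule also needs `p` and `N` to be differentiable. This follows by dominated
convergence, since the kernel's derivative stays bounded even after multiplication by
`1 + ‖α x₁ - x‖`.
-/

open Real Filter Topology

theorem HasFDerivAt.div {𝕜 E : Type*} [NontriviallyNormedField 𝕜] [NormedAddCommGroup E]
    [NormedSpace 𝕜 E] {f g : E → 𝕜} {f' g' : E →L[𝕜] 𝕜} {x : E} (hf : HasFDerivAt f f' x)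
    (hg : HasFDerivAt g g' x) (hx : g x ≠ 0) :
    HasFDerivAt (fun y => f y / g y) ((g x ^ 2)⁻¹ • (g x • f' - f x • g')) x := by
  have hinv : HasFDerivAt (fun y => (g y)⁻¹) (-(g x ^ 2)⁻¹ • g') x :=
    (hasDerivAt_inv hx).comp_hasFDerivAt x hg
  simp only [div_eq_mul_inv]
  refine (hf.fun_mul hinv).congr_fderiv ?_
  ext v
  simp only [add_apply, smul_apply, smul_eq_mul, neg_mul, mul_neg, sub_apply]
  field_simp
  ring

noncomputable def gaussFDeriv (D : ℕ) (σ : ℝ) (μ x : Fin D → ℝ) : (Fin D → ℝ) →L[ℝ] ℝ :=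
  (gauss D σ μ x / σ ^ 2) • ∑ i, (μ i - x i) • (ContinuousLinearMap.proj i : (Fin D → ℝ) →L[ℝ] ℝ)

theorem hasFDerivAt_gauss (D : ℕ) (σ : ℝ) (μ x : Fin D → ℝ) :
    HasFDerivAt (gauss D σ μ) (gaussFDeriv D σ μ x) x := by
  have hsq : HasFDerivAt (fun y : Fin D → ℝ => ∑ i, (y i - μ i) ^ 2)
      (∑ i, (2 * (x i - μ i)) • (ContinuousLinearMap.proj i : (Fin D → ℝ) →L[ℝ] ℝ)) x := by
    refine HasFDerivAt.fun_sum fun i _ => ?_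
    simpa using ((hasFDerivAt_apply i x).sub_const (μ i)).pow 2
  have hgauss : gauss D σ μ = fun y => (2 * π * σ ^ 2) ^ (-(D : ℝ) / 2) *
      exp (-(2 * σ ^ 2)⁻¹ * ∑ i, (y i - μ i) ^ 2) := by
    ext y
    rw [gauss]
    congr 2
    ring
  rw [hgauss]
  refine ((hsq.const_mul _).exp.const_mul _).congr_fderiv ?_
  ext v
  simp only [mul_inv_rev, Finset.mul_sum, neg_mul, Finset.sum_neg_distrib, neg_smul, smul_neg,
    neg_apply, smul_apply, sum_apply, ContinuousLinearMap.proj_apply, smul_eq_mul, gaussFDeriv,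
    hgauss]
  rw [← Finset.sum_neg_distrib]
  exact Finset.sum_congr rfl fun i _ => by ring

theorem gaussFDeriv_apply_single (D : ℕ) (σ : ℝ) (μ x : Fin D → ℝ) (j : Fin D) :
    gaussFDeriv D σ μ x (Pi.single j 1) = gauss D σ μ x * (μ j - x j) / σ ^ 2 := by
  simp only [gaussFDeriv, smul_apply, sum_apply, ContinuousLinearMap.proj_apply, Pi.single_apply,
    smul_eq_mul, mul_ite, mul_one, mul_zero, Finset.sum_ite_eq', Finset.mem_univ, ↓reduceIte]
  ring

theorem gauss_nonneg (D : ℕ) (σ : ℝ) (μ x : Fin D → ℝ) : 0 ≤ gauss D σ μ x := by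
  unfold gauss
  positivity

theorem gauss_pos (D : ℕ) {σ : ℝ} (hσ : σ ≠ 0) (μ x : Fin D → ℝ) : 0 < gauss D σ μ x := by
  unfold gauss
  have : 0 < 2 * π * σ ^ 2 := by positivity
  positivity

theorem sq_norm_le_sum_sq {ι : Type*} [Fintype ι] (v : ι → ℝ) : ‖v‖ ^ 2 ≤ ∑ i, v i ^ 2 := by
  refine (Real.le_sqrt (norm_nonneg v) (Finset.sum_nonneg fun i _ => sq_nonneg _)).1 ?_
  refine (pi_norm_le_iff_of_nonneg (Real.sqrt_nonneg _)).2 fun i => ?_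
  exact Real.abs_le_sqrt (Finset.single_le_sum (f := fun i => v i ^ 2)
    (fun i _ => sq_nonneg _) (Finset.mem_univ i))

theorem gauss_le_mul_exp_neg_norm_sq (D : ℕ) (σ : ℝ) (μ x : Fin D → ℝ) :
    gauss D σ μ x ≤ (2 * π * σ ^ 2) ^ (-(D : ℝ) / 2) * exp (-(‖μ - x‖ ^ 2 / (2 * σ ^ 2))) := by
  unfold gauss
  gcongr
  rw [neg_div, neg_le_neg_iff, norm_sub_rev]
  gcongr
  exact sq_norm_le_sum_sq (x - μ)

theorem norm_gaussFDeriv_le (D : ℕ) (σ : ℝ) (μ x : Fin D → ℝ) :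
    ‖gaussFDeriv D σ μ x‖ ≤ D / σ ^ 2 * gauss D σ μ x * ‖μ - x‖ := by
  have hg := gauss_nonneg D σ μ x
  refine ContinuousLinearMap.opNorm_le_bound _ (by positivity) fun v => ?_
  have hcoord : ∀ i, |(μ i - x i) * v i| ≤ ‖μ - x‖ * ‖v‖ := fun i => by
    rw [abs_mul]
    exact mul_le_mul (norm_le_pi_norm (μ - x) i) (norm_le_pi_norm v i) (abs_nonneg _)
      (norm_nonneg _)
  simp only [gaussFDeriv, smul_apply, sum_apply, ContinuousLinearMap.proj_apply, smul_eq_mul,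
    norm_mul, Real.norm_eq_abs, abs_div, abs_of_nonneg hg, abs_of_nonneg (sq_nonneg σ)]
  calc gauss D σ μ x / σ ^ 2 * |∑ i, (μ i - x i) * v i|
        ≤ gauss D σ μ x / σ ^ 2 * ∑ i : Fin D, ‖μ - x‖ * ‖v‖ := by
        gcongr
        exact (Finset.abs_sum_le_sum_abs _ _).trans (Finset.sum_le_sum fun i _ => hcoord i)
    _ = D / σ ^ 2 * gauss D σ μ x * ‖μ - x‖ * ‖v‖ := by
        simp only [Finset.sum_const, Finset.card_univ, Fintype.card_fin, nsmul_eq_mul]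
        ring

theorem exists_norm_gaussFDeriv_mul_le (D : ℕ) {σ : ℝ} (hσ : σ ≠ 0) :
    ∃ K, ∀ μ x : Fin D → ℝ, ‖gaussFDeriv D σ μ x‖ * (1 + ‖μ - x‖) ≤ K := by
  set c := (2 * π * σ ^ 2) ^ (-(D : ℝ) / 2)
  refine ⟨D / σ ^ 2 * c * (1 + 4 * σ ^ 2), fun μ x => ?_⟩
  set r := ‖μ - x‖
  set u := r ^ 2 / (2 * σ ^ 2)
  have hu0 : 0 ≤ u := by positivity
  have hu : u * exp (-u) ≤ 1 :=
    (mul_exp_neg_le_exp_neg_one u).trans (exp_le_one_iff.2 (by norm_num))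
  have hr : r * (1 + r) ≤ 1 + 4 * σ ^ 2 * u := by
    have : 4 * σ ^ 2 * u = 2 * r ^ 2 := by simp only [u]; field_simp; ring
    nlinarith [sq_nonneg (r - 1)]
  calc ‖gaussFDeriv D σ μ x‖ * (1 + r) ≤ D / σ ^ 2 * gauss D σ μ x * r * (1 + r) := by
        gcongr
        exact norm_gaussFDeriv_le D σ μ x
    _ ≤ D / σ ^ 2 * (c * exp (-u)) * r * (1 + r) := by
        gcongr
        exact gauss_le_mul_exp_neg_norm_sq D σ μ x
    _ = D / σ ^ 2 * c * (exp (-u) * (r * (1 + r))) := by ring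
    _ ≤ D / σ ^ 2 * c * (exp (-u) * (1 + 4 * σ ^ 2 * u)) := by gcongr
    _ = D / σ ^ 2 * c * (exp (-u) + 4 * σ ^ 2 * (u * exp (-u))) := by ring
    _ ≤ D / σ ^ 2 * c * (1 + 4 * σ ^ 2 * 1) := by
        gcongr
        exact exp_le_one_iff.2 (neg_nonpos.2 hu0)
    _ = D / σ ^ 2 * c * (1 + 4 * σ ^ 2) := by rw [mul_one]

theorem exists_norm_gaussFDeriv_le (D : ℕ) {σ : ℝ} (hσ : σ ≠ 0) :
    ∃ K, ∀ μ x : Fin D → ℝ, ‖gaussFDeriv D σ μ x‖ ≤ K := by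
  obtain ⟨K, hK⟩ := exists_norm_gaussFDeriv_mul_le D hσ
  exact ⟨K, fun μ x => (le_mul_of_one_le_right (norm_nonneg _)
    (le_add_of_nonneg_right (norm_nonneg _))).trans (hK μ x)⟩

theorem differentiableAt_integral_mul_gauss_mul {D : ℕ} {σ α : ℝ} (w q : (Fin D → ℝ) → ℝ)
    {x₀ : Fin D → ℝ} (hint : ∀ x, Integrable (fun x1 => w x1 * gauss D σ (α • x1) x * q x1))
    {s : Set (Fin D → ℝ)} (hs : s ∈ 𝓝 x₀) {bound : (Fin D → ℝ) → ℝ} (hbound_int : Integrable bound)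
    (hbound : ∀ x1, ∀ x ∈ s, |w x1 * q x1| * ‖gaussFDeriv D σ (α • x1) x‖ ≤ bound x1) :
    DifferentiableAt ℝ (fun y => ∫ x1, w x1 * gauss D σ (α • x1) y * q x1) x₀ := by
  have hF' : (fun x1 => (w x1 * q x1) • gaussFDeriv D σ (α • x1) x₀) = fun x1 =>
      (w x1 * gauss D σ (α • x1) x₀ * q x1) • (σ ^ 2)⁻¹ •
        ∑ i, ((α • x1) i - x₀ i) • (ContinuousLinearMap.proj i : (Fin D → ℝ) →L[ℝ] ℝ) := by
    ext x1 : 1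
    rw [gaussFDeriv, smul_smul, smul_smul]
    congr 1
    ring
  have hF'_meas : AEStronglyMeasurable (fun x1 => (w x1 * q x1) • gaussFDeriv D σ (α • x1) x₀) := by
    rw [hF']
    exact (hint x₀).aestronglyMeasurable.smul (by fun_prop : Continuous _).aestronglyMeasurable
  have hdiff : ∀ x1, ∀ x ∈ s, HasFDerivAt (fun y => w x1 * gauss D σ (α • x1) y * q x1)
      ((w x1 * q x1) • gaussFDeriv D σ (α • x1) x) x := fun x1 x _ => by
    simpa only [mul_right_comm _ _ (q x1), mul_comm] using
      (hasFDerivAt_gauss D σ (α • x1) x).const_mul (w x1 * q x1)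
  refine (hasFDerivAt_integral_of_dominated_of_fderiv_le hs
    (Eventually.of_forall fun x => (hint x).aestronglyMeasurable) (hint x₀) hF'_meas
    (Eventually.of_forall fun x1 x hx => ?_) hbound_int
    (Eventually.of_forall hdiff)).differentiableAt
  rw [norm_smul, Real.norm_eq_abs]
  exact hbound x1 x hx

theorem differentiable_integral_gauss_mul {D : ℕ} {σ α : ℝ} (hσ : σ ≠ 0)
    {q : (Fin D → ℝ) → ℝ} (hq : Integrable q)
    (hint : ∀ x, Integrable (fun x1 => gauss D σ (α • x1) x * q x1)) :
    Differentiable ℝ (fun y => ∫ x1, gauss D σ (α • x1) y * q x1) := by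
  intro x₀
  obtain ⟨K, hK⟩ := exists_norm_gaussFDeriv_le D hσ
  simpa only [one_mul] using differentiableAt_integral_mul_gauss_mul (fun _ => 1) q
    (by simpa only [one_mul] using hint) univ_mem (hq.norm.const_mul K)
    fun x1 x _ => by
      rw [one_mul, ← Real.norm_eq_abs, mul_comm]
      exact mul_le_mul_of_nonneg_right (hK _ _) (norm_nonneg _)

theorem differentiable_integral_coord_mul_gauss_mul {D : ℕ} {σ α : ℝ} (hσ : σ ≠ 0)
    {q : (Fin D → ℝ) → ℝ} (hq : Integrable q) (i : Fin D)
    (hint : ∀ x, Integrable (fun x1 => x1 i * gauss D σ (α • x1) x * q x1)) :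
    Differentiable ℝ (fun y => ∫ x1, x1 i * gauss D σ (α • x1) y * q x1) := by
  intro x₀
  rcases eq_or_ne α 0 with rfl | hα
  · -- at `α = 0` the kernel does not depend on `x1`, so `hint` makes `x1 i * q x1` integrable
    have hcoord : Integrable (fun x1 => x1 i * q x1) := by
      refine (integrable_const_mul_iff (gauss_pos D hσ 0 x₀).ne'.isUnit _).1 ?_
      simpa only [zero_smul, mul_left_comm, mul_assoc] using hint x₀
    obtain ⟨K, hK⟩ := exists_norm_gaussFDeriv_le D hσ
    refine differentiableAt_integral_mul_gauss_mul (fun x1 => x1 i) q hint univ_mem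
      (hcoord.norm.const_mul K) fun x1 x _ => ?_
    rw [← Real.norm_eq_abs, mul_comm]
    exact mul_le_mul_of_nonneg_right (hK _ _) (norm_nonneg _)
  · obtain ⟨K, hK⟩ := exists_norm_gaussFDeriv_mul_le D hσ
    refine differentiableAt_integral_mul_gauss_mul (fun x1 => x1 i) q hint
      (Metric.ball_mem_nhds x₀ one_pos) (hq.norm.const_mul ((‖x₀‖ + 1) / |α| * K))
      fun x1 x hx => ?_
    set r := ‖α • x1 - x‖
    have hcoord : |α| * |x1 i| ≤ (‖x₀‖ + 1) * (1 + r) := calc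
      |α| * |x1 i| = ‖(α • x1) i‖ := by rw [Pi.smul_apply, smul_eq_mul, Real.norm_eq_abs, abs_mul]
      _ ≤ ‖x‖ + r := (norm_le_pi_norm _ i).trans (norm_le_norm_add_norm_sub' _ _)
      _ ≤ (‖x₀‖ + 1) * (1 + r) := by
        nlinarith [norm_lt_of_mem_ball hx, norm_nonneg x₀, norm_nonneg (α • x1 - x)]
    set G := ‖gaussFDeriv D σ (α • x1) x‖
    have hG : |x1 i| * G ≤ (‖x₀‖ + 1) / |α| * K := by
      rw [div_mul_eq_mul_div, le_div_iff₀ (abs_pos.2 hα)]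
      calc |x1 i| * G * |α| = |α| * |x1 i| * G := by ring
        _ ≤ (‖x₀‖ + 1) * (1 + r) * G := by gcongr
        _ = (‖x₀‖ + 1) * (G * (1 + r)) := by ring
        _ ≤ (‖x₀‖ + 1) * K := by gcongr; exact hK _ _
    calc |x1 i * q x1| * G = |x1 i| * G * ‖q x1‖ := by rw [abs_mul, Real.norm_eq_abs]; ring
      _ ≤ (‖x₀‖ + 1) / |α| * K * ‖q x1‖ := by gcongr

theorem integral_mul_fderiv_gauss_mul {D : ℕ} {σ α : ℝ} (w q : (Fin D → ℝ) → ℝ)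
    (x : Fin D → ℝ) (j : Fin D) (hint : Integrable (fun x1 => w x1 * gauss D σ (α • x1) x * q x1))
    (hint_j : Integrable (fun x1 => w x1 * x1 j * gauss D σ (α • x1) x * q x1)) :
    ∫ x1, w x1 * fderiv ℝ (fun y => gauss D σ (α • x1) y) x (Pi.single j 1) * q x1
      = (α * (∫ x1, w x1 * x1 j * gauss D σ (α • x1) x * q x1)
          - x j * ∫ x1, w x1 * gauss D σ (α • x1) x * q x1) / σ ^ 2 := by
  have hscore : ∀ x1, w x1 * fderiv ℝ (fun y => gauss D σ (α • x1) y) x (Pi.single j 1) * q x1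
      = α / σ ^ 2 * (w x1 * x1 j * gauss D σ (α • x1) x * q x1)
        - x j / σ ^ 2 * (w x1 * gauss D σ (α • x1) x * q x1) := fun x1 => by
    rw [(hasFDerivAt_gauss D σ (α • x1) x).fderiv, gaussFDeriv_apply_single, Pi.smul_apply,
      smul_eq_mul]
    ring
  rw [integral_congr_ae (Eventually.of_forall hscore),
    integral_sub (hint_j.const_mul _) (hint.const_mul _), integral_const_mul, integral_const_mul]
  ring

theorem hess_log_of_fderiv_eq {D : ℕ} {α σ : ℝ} (hσ : σ ≠ 0) {p : (Fin D → ℝ) → ℝ}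
    {N : Fin D → (Fin D → ℝ) → ℝ} {M : Fin D → Fin D → (Fin D → ℝ) → ℝ}
    (hp_pos : ∀ y, 0 < p y) (hp_diff : Differentiable ℝ p) (hN_diff : ∀ i, Differentiable ℝ (N i))
    (hp_deriv : ∀ y j, fderiv ℝ p y (Pi.single j 1) = (α * N j y - y j * p y) / σ ^ 2)
    (hN_deriv : ∀ y i j, fderiv ℝ (N i) y (Pi.single j 1) = (α * M i j y - y j * N i y) / σ ^ 2)
    (x : Fin D → ℝ) (i j : Fin D) :
    hess D (fun y => Real.log (p y)) x i j
      = α ^ 2 / σ ^ 4 * (M i j x / p x - N i x / p x * (N j x / p x))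
        - 1 / σ ^ 2 * if i = j then 1 else 0 := by
  have hgrad : (fun y => fderiv ℝ (fun z => Real.log (p z)) y (Pi.single i 1))
      = fun y => (σ ^ 2)⁻¹ * (α * (N i y / p y) - y i) := by
    ext y
    have hpy := (hp_pos y).ne'
    rw [fderiv.log (hp_diff y) hpy, smul_apply, hp_deriv, smul_eq_mul]
    field_simp
  have hquot := (hN_diff i x).hasFDerivAt.div (hp_diff x).hasFDerivAt (hp_pos x).ne'
  rw [hess, hgrad,
    (((hquot.const_mul α).fun_sub (hasFDerivAt_apply i x)).const_mul (σ ^ 2)⁻¹).fderiv]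
  simp only [smul_apply, sub_apply, smul_eq_mul, ContinuousLinearMap.proj_apply, one_div, mul_ite,
    mul_one, mul_zero]
  rw [hN_deriv, hp_deriv, Pi.single_apply]
  have hpx := (hp_pos x).ne'
  split_ifs <;> field_simp <;> ring

theorem stmt4_general (D : ℕ) (α σ : ℝ) (hσ : 0 < σ)
    (q : (Fin D → ℝ) → ℝ) (hq1 : ∫ y, q y = 1)
    (p : (Fin D → ℝ) → ℝ)
    (hp : ∀ x, p x = ∫ x1, gauss D σ (α • x1) x * q x1)
    (hp_pos : ∀ x, 0 < p x)
    (hp_int : ∀ x, Integrable (fun x1 => gauss D σ (α • x1) x * q x1))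
    (hm_int : ∀ x i, Integrable (fun x1 => x1 i * gauss D σ (α • x1) x * q x1))
    (hm2_int : ∀ x i j, Integrable (fun x1 => x1 i * x1 j * gauss D σ (α • x1) x * q x1))
    (m : (Fin D → ℝ) → Fin D → ℝ)
    (hm : ∀ x i, m x i = (∫ x1, x1 i * gauss D σ (α • x1) x * q x1) / p x)
    (C : (Fin D → ℝ) → Matrix (Fin D) (Fin D) ℝ)
    (hC : ∀ x i j, C x i j
        = (∫ x1, x1 i * x1 j * gauss D σ (α • x1) x * q x1) / p x - m x i * m x j)
    -- differentiation under the integral sign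
    (hswap_p : ∀ x j, fderiv ℝ p x (Pi.single j 1)
        = ∫ x1, fderiv ℝ (fun y => gauss D σ (α • x1) y) x (Pi.single j 1) * q x1)
    (hswap_m : ∀ x i j,
        fderiv ℝ (fun y => ∫ x1, x1 i * gauss D σ (α • x1) y * q x1) x (Pi.single j 1)
        = ∫ x1, x1 i * fderiv ℝ (fun y => gauss D σ (α • x1) y) x (Pi.single j 1) * q x1) :
    (∀ x i j, hess D (fun y => Real.log (p y)) x i j
        = (α ^ 2 / σ ^ 4) * C x i j - (1 / σ ^ 2) * (if i = j then 1 else 0))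
    ∧ (∀ x, ∑ i, hess D (fun y => Real.log (p y)) x i i
        = (α ^ 2 * Matrix.trace (C x) - D * σ ^ 2) / σ ^ 4) := by
  have hσ' : σ ≠ 0 := hσ.ne'
  have hq : Integrable q := integrable_of_integral_eq_one hq1
  have hp_deriv : ∀ y j, fderiv ℝ p y (Pi.single j 1)
      = (α * (∫ x1, x1 j * gauss D σ (α • x1) y * q x1) - y j * p y) / σ ^ 2 := fun y j => by
    rw [hswap_p, hp y]
    simpa only [one_mul] using integral_mul_fderiv_gauss_mul (fun _ => 1) q y j
      (by simpa only [one_mul] using hp_int y) (by simpa only [one_mul] using hm_int y j)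
  have hhess : ∀ x i j, hess D (fun y => Real.log (p y)) x i j
      = (α ^ 2 / σ ^ 4) * C x i j - (1 / σ ^ 2) * (if i = j then 1 else 0) := fun x i j => by
    rw [hess_log_of_fderiv_eq hσ' hp_pos
      (funext hp ▸ differentiable_integral_gauss_mul hσ' hq hp_int)
      (fun i => differentiable_integral_coord_mul_gauss_mul hσ' hq i fun x => hm_int x i)
      hp_deriv (fun y i j => (hswap_m y i j).trans
        (integral_mul_fderiv_gauss_mul (fun x1 => x1 i) q y j (hm_int y i) (hm2_int y i j))),
      hC, hm, hm]
  refine ⟨hhess, fun x => ?_⟩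
  simp only [hhess, ↓reduceIte, mul_one, Finset.sum_sub_distrib, ← Finset.mul_sum, Finset.sum_const,
    Finset.card_univ, Fintype.card_fin, nsmul_eq_mul, Matrix.trace, Matrix.diag]
  field_simp

/-- **Hessian and Laplacian of the log-marginal (second-order Tweedie).**
`∇² log p_t(x) = (α²/σ⁴) Cov[X₁|X_t=x] − (1/σ²) I`, and hence
`Δ log p_t(x) = (α² tr Cov[X₁|X_t=x] − D σ²)/σ⁴`. -/
theorem stmt4 (D : ℕ) (α σ : ℝ) (hσ : 0 < σ)
    (q : (Fin D → ℝ) → ℝ) (hq0 : ∀ y, 0 ≤ q y) (hq1 : ∫ y, q y = 1)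
    (p : (Fin D → ℝ) → ℝ)
    (hp : ∀ x, p x = ∫ x1, gauss D σ (α • x1) x * q x1)
    (hp_pos : ∀ x, 0 < p x)
    (hp_int : ∀ x, Integrable (fun x1 => gauss D σ (α • x1) x * q x1))
    (hm_int : ∀ x i, Integrable (fun x1 => x1 i * gauss D σ (α • x1) x * q x1))
    (hm2_int : ∀ x i j, Integrable (fun x1 => x1 i * x1 j * gauss D σ (α • x1) x * q x1))
    (m : (Fin D → ℝ) → Fin D → ℝ)
    (hm : ∀ x i, m x i = (∫ x1, x1 i * gauss D σ (α • x1) x * q x1) / p x)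
    (C : (Fin D → ℝ) → Matrix (Fin D) (Fin D) ℝ)
    (hC : ∀ x i j, C x i j
        = (∫ x1, x1 i * x1 j * gauss D σ (α • x1) x * q x1) / p x - m x i * m x j)
    -- differentiation under the integral sign
    (hswap_p : ∀ x j, fderiv ℝ p x (Pi.single j 1)
        = ∫ x1, fderiv ℝ (fun y => gauss D σ (α • x1) y) x (Pi.single j 1) * q x1)
    (hswap_m : ∀ x i j,
        fderiv ℝ (fun y => ∫ x1, x1 i * gauss D σ (α • x1) y * q x1) x (Pi.single j 1)
        = ∫ x1, x1 i * fderiv ℝ (fun y => gauss D σ (α • x1) y) x (Pi.single j 1) * q x1) :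
    (∀ x i j, hess D (fun y => Real.log (p y)) x i j
        = (α ^ 2 / σ ^ 4) * C x i j - (1 / σ ^ 2) * (if i = j then 1 else 0))
    ∧ (∀ x, ∑ i, hess D (fun y => Real.log (p y)) x i i
        = (α ^ 2 * Matrix.trace (C x) - D * σ ^ 2) / σ ^ 4) :=
  stmt4_general D α σ hσ q hq1 p hp hp_pos hp_int hm_int hm2_int m hm C hC hswap_p hswap_m
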